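/- Let θ = (θ₁,θ₂,θ₃,θ₄) ∈ ℂ⁴ and suppose O ⊆ S(θ) is a finite G(2)-orbit with at least 7 elements. Then all four parameters θ₁, θ₂, θ₃, θ₄ are real, and the orbit O lies in the real part of the surface: O ⊆ S(θ) ∩ ℝ³, i.e. every coordinate of every point of O is a real number. -/

import Mathlib

noncomputable section

/-- The defining cubic polynomial `f(x,θ)` of the character variety. -/
def pvF (θ : ℂ × ℂ × ℂ × ℂ) (x : ℂ × ℂ × ℂ) : ℂ :=
  x.1 * x.2.1 * x.2.2 + x.1 ^ 2 + x.2.1 ^ 2 + x.2.2 ^ 2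
    - θ.1 * x.1 - θ.2.1 * x.2.1 - θ.2.2.1 * x.2.2 + θ.2.2.2

/-- The affine cubic surface `S(θ)`. -/
def pvS (θ : ℂ × ℂ × ℂ × ℂ) : Set (ℂ × ℂ × ℂ) := {x | pvF θ x = 0}

/-- The three involutions `σ₁, σ₂, σ₃` (indexed by `Fin 3`). -/
def sig (θ : ℂ × ℂ × ℂ × ℂ) : Fin 3 → (ℂ × ℂ × ℂ) → (ℂ × ℂ × ℂ) :=
  ![fun x => (θ.1 - x.2.1 * x.2.2 - x.1, x.2.1, x.2.2),
    fun x => (x.1, θ.2.1 - x.1 * x.2.2 - x.2.1, x.2.2),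
    fun x => (x.1, x.2.1, θ.2.2.1 - x.1 * x.2.1 - x.2.2)]

lemma sig_involutive (θ : ℂ × ℂ × ℂ × ℂ) (i : Fin 3) : Function.Involutive (sig θ i) := by
  intro x
  obtain ⟨a, b, c⟩ := x
  fin_cases i <;> simp [sig]

/-- `σᵢ` as a bijection (permutation) of `ℂ³`. -/
def sigPerm (θ : ℂ × ℂ × ℂ × ℂ) (i : Fin 3) : Equiv.Perm (ℂ × ℂ × ℂ) :=
  (sig_involutive θ i).toPerm

/-- The subgroup `G(2)` of even words: the subgroup of bijections of `ℂ³`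
generated by the products `σᵢ σⱼ`. -/
def G2 (θ : ℂ × ℂ × ℂ × ℂ) : Subgroup (Equiv.Perm (ℂ × ℂ × ℂ)) :=
  Subgroup.closure {g | ∃ i j : Fin 3, g = sigPerm θ i * sigPerm θ j}


/-!
If `x` lies in a finite orbit, it is a periodic point of `σ₂σ₃`, which fixes `x₁` and acts on
`(x₂, x₃)` by an affine map whose linear part has determinant `1` and trace `x₁² - 2`. Unless `x` is
a fixed point, periodicity makes an eigenvalue `λ` a root of unity, so `x₁² = 2 + λ + λ̄ ≥ 0` and
`x₁` is real. Hence a point with non-real `x₁` is fixed by `σ₂` and `σ₃`, and applying the same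
dichotomy to its neighbours `σ₁x`, `σ₃σ₁x`, `σ₂σ₁x` shows that they already exhaust the orbit,
which then has at most four points. The other coordinates follow by the cyclic symmetry of the
surface, and the parameters are read off from real points of the orbit.
-/

open Function Set
open scoped Pointwise

theorem pow_eq_one_of_succ_eq_mul {M : Type*} [CommMonoidWithZero M] [IsCancelMulZero M]
    {f : ℕ → M} {r : M} {m : ℕ} (hf : ∀ k, f (k + 1) = r * f k) (hm : f m = f 0) (h0 : f 0 ≠ 0) :
    r ^ m = 1 := by
  have hgeom : ∀ k, f k = r ^ k * f 0 := by
    intro k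
    induction k with
    | zero => simp
    | succ k ih => rw [hf, ih, pow_succ', mul_assoc]
  rwa [hgeom, mul_eq_right₀ h0] at hm

theorem Function.Periodic.sub_succ {R : Type*} [AddCommGroup R] {u : ℕ → R} {m : ℕ}
    (hper : Periodic u m) : Periodic (fun k => u (k + 1) - u k) m := fun k => by
  simp only [add_right_comm k m 1, hper (k + 1), hper k]

theorem pow_eq_one_or_pow_eq_one_of_periodic {R : Type*} [CommRing R] [IsDomain R]
    {r s : R} {u : ℕ → R} {m : ℕ} (hu : ∀ k, u (k + 2) = (r + s) * u (k + 1) - r * s * u k)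
    (hper : Periodic u m) (hne : u 0 ≠ 0 ∨ u 1 ≠ 0) : r ^ m = 1 ∨ s ^ m = 1 := by
  set w : ℕ → R := fun k => u (k + 1) - s * u k
  have hw : ∀ k, w (k + 1) = r * w k := fun k => by simp only [w, hu]; ring
  have hwper : Periodic w m := fun k => by simp only [w, add_right_comm k m 1, hper (k + 1), hper k]
  by_cases hw0 : w 0 = 0
  · have hw_zero : ∀ k, w k = 0 := by
      intro k
      induction k with
      | zero => exact hw0
      | succ k ih => rw [hw, ih, mul_zero]
    have hgeom : ∀ k, u (k + 1) = s * u k := fun k => sub_eq_zero.1 (hw_zero k)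
    refine .inr (pow_eq_one_of_succ_eq_mul hgeom hper.eq fun h0 => ?_)
    simp [hgeom 0, h0] at hne
  · exact .inl (pow_eq_one_of_succ_eq_mul hw hwper.eq hw0)

theorem pow_eq_one_or_pow_eq_one_of_periodic_affine {R : Type*} [CommRing R] [IsDomain R]
    {r s c : R} {u : ℕ → R} {m : ℕ}
    (hu : ∀ k, u (k + 2) = (r + s) * u (k + 1) - r * s * u k + c)
    (hper : Periodic u m) (hne : u 1 ≠ u 0) : r ^ m = 1 ∨ s ^ m = 1 :=
  pow_eq_one_or_pow_eq_one_of_periodic (fun k => by simp only [hu]; ring) hper.sub_succ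
    (.inl (sub_ne_zero.2 hne))

theorem Complex.im_eq_zero_of_sq_eq_ofReal {a : ℂ} {x : ℝ} (hx : 0 ≤ x) (h : a ^ 2 = x) :
    a.im = 0 := by
  have him : a.re * a.im + a.im * a.re = 0 := by
    simpa only [sq, mul_im, ofReal_im] using congrArg im h
  have hre : a.re * a.re - a.im * a.im = x := by
    simpa only [sq, mul_re, ofReal_re] using congrArg re h
  have h4 : a.im ^ 4 ≤ 0 := by
    nlinarith [mul_le_mul_of_nonneg_right (show a.im ^ 2 ≤ a.re ^ 2 by nlinarith) (sq_nonneg a.im)]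
  exact pow_eq_zero_iff (n := 4) (by norm_num) |>.1 (le_antisymm h4 (by positivity))

theorem Complex.im_eq_zero_of_sq_sub_two_eq_add {a r s : ℂ} {m : ℕ} (hm : m ≠ 0)
    (hr : r ^ m = 1) (hrs : r * s = 1) (ha : a ^ 2 - 2 = r + s) : a.im = 0 := by
  have hnorm : ‖r‖ = 1 := norm_eq_one_of_pow_eq_one hr hm
  have hs : s = starRingEnd ℂ r := by
    rw [← inv_eq_conj hnorm, eq_inv_of_mul_eq_one_right hrs]
  refine im_eq_zero_of_sq_eq_ofReal (x := 2 + 2 * r.re) ?_ ?_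
  · linarith [(abs_le.1 (hnorm ▸ abs_re_le_norm r)).1]
  · rw [show a ^ 2 = 2 + (r + s) by rw [← ha]; ring, hs, add_conj]
    push_cast
    ring

theorem Complex.im_eq_zero_of_periodic_coupled {a c₁ c₂ : ℂ} {U V : ℕ → ℂ} {m : ℕ} (hm : m ≠ 0)
    (hU : ∀ k, U (k + 1) = c₁ - a * V k - U k) (hV : ∀ k, V (k + 1) = c₂ - a * U (k + 1) - V k)
    (hUper : Periodic U m) (hVper : Periodic V m) (hne : U 1 ≠ U 0 ∨ V 1 ≠ V 0) : a.im = 0 := by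
  obtain ⟨r, hr⟩ : ∃ r : ℂ, 1 * (r * r) + -(a ^ 2 - 2) * r + 1 = 0 :=
    exists_quadratic_eq_zero one_ne_zero (IsAlgClosed.exists_eq_mul_self _)
  set s := a ^ 2 - 2 - r
  have hsum : r + s = a ^ 2 - 2 := by ring
  have hprod : r * s = 1 := by linear_combination -hr
  -- eliminating one sequence leaves `u (k + 2) = (a ^ 2 - 2) * u (k + 1) - u k + const`
  have hroot : r ^ m = 1 ∨ s ^ m = 1 := by
    rcases hne with hne | hne
    · refine pow_eq_one_or_pow_eq_one_of_periodic_affine (c := 2 * c₁ - a * c₂) (fun k => ?_)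
        hUper hne
      rw [hsum, hprod]
      linear_combination hU (k + 1) - a * hV k + hU k
    · refine pow_eq_one_or_pow_eq_one_of_periodic_affine (c := 2 * c₂ - a * c₁) (fun k => ?_)
        hVper hne
      rw [hsum, hprod]
      linear_combination hV (k + 1) - a * hU (k + 1) + hV k
  rcases hroot with h | h
  · exact im_eq_zero_of_sq_sub_two_eq_add hm h hprod hsum.symm
  · exact im_eq_zero_of_sq_sub_two_eq_add hm h (by rw [mul_comm, hprod]) (by rw [← hsum, add_comm])

theorem Set.MapsTo.mem_periodicPts {α : Type*} {f : α → α} {s : Set α} (hf : Injective f)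
    (hs : s.Finite) (h : MapsTo f s s) {x : α} (hx : x ∈ s) : x ∈ periodicPts f := by
  have := hs.to_subtype
  obtain ⟨n, hn, hper⟩ :=
    Function.mem_periodicPts.1 ((h.restrict_inj.2 hf.injOn).mem_periodicPts ⟨x, hx⟩)
  exact mk_mem_periodicPts hn (hper.map (g := Subtype.val) fun _ => rfl)

theorem Set.encard_insert_four_le {α : Type*} (a b c d : α) :
    ({a, b, c, d} : Set α).encard ≤ 4 := by
  classical
  simpa using (encard_coe_eq_coe_finsetCard ({a, b, c, d} : Finset α)).le.trans
    (by exact_mod_cast Finset.card_le_four)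

theorem sig_zero_apply (θ : ℂ × ℂ × ℂ × ℂ) (x : ℂ × ℂ × ℂ) :
    sig θ 0 x = (θ.1 - x.2.1 * x.2.2 - x.1, x.2.1, x.2.2) := rfl

theorem sig_one_apply (θ : ℂ × ℂ × ℂ × ℂ) (x : ℂ × ℂ × ℂ) :
    sig θ 1 x = (x.1, θ.2.1 - x.1 * x.2.2 - x.2.1, x.2.2) := rfl

theorem sig_two_apply (θ : ℂ × ℂ × ℂ × ℂ) (x : ℂ × ℂ × ℂ) :
    sig θ 2 x = (x.1, x.2.1, θ.2.2.1 - x.1 * x.2.1 - x.2.2) := rfl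

theorem im_fst_eq_zero_of_isPeriodicPt {θ : ℂ × ℂ × ℂ × ℂ} {y : ℂ × ℂ × ℂ} {m : ℕ} (hm : m ≠ 0)
    (hy : IsPeriodicPt (sig θ 1 ∘ sig θ 2) m y) (hne : sig θ 1 (sig θ 2 y) ≠ y) : y.1.im = 0 := by
  set P : ℕ → ℂ × ℂ × ℂ := fun k => (sig θ 1 ∘ sig θ 2)^[k] y
  have hP : ∀ k, P (k + 1) = sig θ 1 (sig θ 2 (P k)) := fun k => iterate_succ_apply' _ k y
  have hfst : ∀ k, (P k).1 = y.1 := by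
    intro k
    induction k with
    | zero => rfl
    | succ k ih => rw [hP]; exact ih
  have hper : Periodic P m := fun k => by simp only [P, iterate_add_apply, hy.eq]
  refine Complex.im_eq_zero_of_periodic_coupled (U := fun k => (P k).2.2)
    (V := fun k => (P k).2.1) (c₁ := θ.2.2.1) (c₂ := θ.2.1) hm (fun k => ?_) (fun k => ?_)
    (fun k => by simp only [hper k]) (fun k => by simp only [hper k]) ?_
  · simp only [hP k, ← hfst k]; rfl
  · simp only [hP k, ← hfst k]; rfl
  · contrapose! hne
    exact Prod.ext rfl (Prod.ext hne.2 hne.1)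

/-- The two properties of a `G(2)`-orbit that the argument uses; unlike being an orbit, they
transfer directly along the coordinate symmetries of the surface. -/
structure IsEvenOrbitLike (θ : ℂ × ℂ × ℂ × ℂ) (O : Set (ℂ × ℂ × ℂ)) : Prop where
  mapsTo : ∀ i j, MapsTo (sig θ i ∘ sig θ j) O O
  subset_of_mapsTo : ∀ C, (∀ i, MapsTo (sig θ i) C C) → ∀ x ∈ O, x ∈ C → O ⊆ C

theorem G2_le_stabilizer {θ : ℂ × ℂ × ℂ × ℂ} {C : Set (ℂ × ℂ × ℂ)}
    (hC : ∀ i, MapsTo (sig θ i) C C) :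
    G2 θ ≤ MulAction.stabilizer (Equiv.Perm (ℂ × ℂ × ℂ)) C := by
  have hsig : ∀ i, sigPerm θ i ∈ MulAction.stabilizer (Equiv.Perm (ℂ × ℂ × ℂ)) C := fun i =>
    MulAction.mem_stabilizer_set.2 fun z =>
      ⟨fun hz => sig_involutive θ i z ▸ hC i hz, fun hz => hC i hz⟩
  exact (Subgroup.closure_le _).2 fun _ ⟨i, j, hg⟩ => hg ▸ mul_mem (hsig i) (hsig j)

theorem isEvenOrbitLike_G2 (θ : ℂ × ℂ × ℂ × ℂ) (x₀ : ℂ × ℂ × ℂ) :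
    IsEvenOrbitLike θ {y | ∃ g ∈ G2 θ, g x₀ = y} where
  mapsTo i j := by
    rintro _ ⟨g, hg, rfl⟩
    exact ⟨sigPerm θ i * sigPerm θ j * g, mul_mem (Subgroup.subset_closure ⟨i, j, rfl⟩) hg, rfl⟩
  subset_of_mapsTo C hC := by
    rintro _ ⟨h, hh, rfl⟩ hxC _ ⟨g, hg, rfl⟩
    have hstab := MulAction.mem_stabilizer_set.1 (G2_le_stabilizer hC (mul_mem hg (inv_mem hh)))
    simpa using (hstab (h x₀)).2 hxC

theorem IsEvenOrbitLike.image {θ θ' : ℂ × ℂ × ℂ × ℂ} {O : Set (ℂ × ℂ × ℂ)}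
    (hO : IsEvenOrbitLike θ O) {φ : ℂ × ℂ × ℂ → ℂ × ℂ × ℂ} {π : Fin 3 → Fin 3}
    (hπ : Surjective π) (hφ : ∀ i x, φ (sig θ (π i) x) = sig θ' i (φ x)) :
    IsEvenOrbitLike θ' (φ '' O) where
  mapsTo i j := by
    rintro _ ⟨x, hx, rfl⟩
    exact ⟨_, hO.mapsTo (π i) (π j) hx, by simp only [comp_apply, hφ]⟩
  subset_of_mapsTo C hC := by
    rintro _ ⟨x, hx, rfl⟩ hxC
    refine image_subset_iff.2 (hO.subset_of_mapsTo (φ ⁻¹' C) (fun j z hz => ?_) x hx hxC)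
    obtain ⟨i, rfl⟩ := hπ j
    rw [mem_preimage, hφ]
    exact hC i hz

def rot (x : ℂ × ℂ × ℂ) : ℂ × ℂ × ℂ := (x.2.1, x.2.2, x.1)

def rotParam (θ : ℂ × ℂ × ℂ × ℂ) : ℂ × ℂ × ℂ × ℂ := (θ.2.1, θ.2.2.1, θ.1, θ.2.2.2)

theorem rot_injective : Injective rot := fun _ _ h => by
  simp only [rot, Prod.mk.injEq] at h
  exact Prod.ext h.2.2 (Prod.ext h.1 h.2.1)

theorem rot_sig (θ : ℂ × ℂ × ℂ × ℂ) (i : Fin 3) (x : ℂ × ℂ × ℂ) :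
    rot (sig θ (i + 1) x) = sig (rotParam θ) i (rot x) := by
  fin_cases i <;> simp [rot, rotParam, sig, mul_comm]

namespace IsEvenOrbitLike

variable {θ : ℂ × ℂ × ℂ × ℂ} {O : Set (ℂ × ℂ × ℂ)} {x : ℂ × ℂ × ℂ}

theorem image_rot (hO : IsEvenOrbitLike θ O) : IsEvenOrbitLike (rotParam θ) (rot '' O) :=
  hO.image (add_right_surjective 1) (rot_sig θ)

theorem fixed_of_im_fst_ne_zero (hO : IsEvenOrbitLike θ O) (hfin : O.Finite) (hx : x ∈ O)
    (him : x.1.im ≠ 0) : sig θ 1 x = x ∧ sig θ 2 x = x := by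
  obtain ⟨m, hm, hper⟩ := Function.mem_periodicPts.1 <| (hO.mapsTo 1 2).mem_periodicPts
    ((sig_involutive θ 1).injective.comp (sig_involutive θ 2).injective) hfin hx
  have hfix : sig θ 1 (sig θ 2 x) = x := by
    by_contra hne
    exact him (im_fst_eq_zero_of_isPeriodicPt hm.ne' hper hne)
  have h2 : sig θ 2 x = x := Prod.ext rfl (Prod.ext rfl (congrArg (·.2.2) hfix))
  exact ⟨by rwa [h2] at hfix, h2⟩

theorem fixed_of_im_snd_ne_zero (hO : IsEvenOrbitLike θ O) (hfin : O.Finite) (hx : x ∈ O)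
    (him : x.2.1.im ≠ 0) : sig θ 2 x = x ∧ sig θ 0 x = x := by
  obtain ⟨h1, h2⟩ := hO.image_rot.fixed_of_im_fst_ne_zero (x := rot x) (hfin.image rot)
    (mem_image_of_mem rot hx) him
  exact ⟨rot_injective ((rot_sig θ 1 x).trans h1), rot_injective ((rot_sig θ 2 x).trans h2)⟩

theorem fixed_of_im_thd_ne_zero (hO : IsEvenOrbitLike θ O) (hfin : O.Finite) (hx : x ∈ O)
    (him : x.2.2.im ≠ 0) : sig θ 0 x = x ∧ sig θ 1 x = x := by
  obtain ⟨h2, h0⟩ := hO.image_rot.fixed_of_im_snd_ne_zero (x := rot x) (hfin.image rot)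
    (mem_image_of_mem rot hx) him
  exact ⟨rot_injective ((rot_sig θ 2 x).trans h2), rot_injective ((rot_sig θ 0 x).trans h0)⟩

theorem im_snd_thd_eq_zero_of_im_fst_sig_zero_eq_zero (hO : IsEvenOrbitLike θ O)
    (hfin : O.Finite) (hx : x ∈ O) (him : x.1.im ≠ 0) (hy : (sig θ 0 x).1.im = 0) :
    x.2.1.im = 0 ∧ x.2.2.im = 0 := by
  have hmove : sig θ 0 x ≠ x := fun h => him (h ▸ hy)
  exact ⟨by_contra fun hb => hmove (hO.fixed_of_im_snd_ne_zero hfin hx hb).2,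
    by_contra fun hc => hmove (hO.fixed_of_im_thd_ne_zero hfin hx hc).1⟩

theorem fixed_or_eq_sig_two_sig_zero (hO : IsEvenOrbitLike θ O) (hfin : O.Finite) (hx : x ∈ O)
    (him : x.1.im ≠ 0) :
    (sig θ 0 (sig θ 2 (sig θ 0 x)) = sig θ 2 (sig θ 0 x) ∧
      sig θ 1 (sig θ 2 (sig θ 0 x)) = sig θ 2 (sig θ 0 x)) ∨
    sig θ 2 (sig θ 0 x) = sig θ 0 x := by
  set y := sig θ 0 x
  by_cases hy : y.1.im = 0
  · obtain ⟨hb, hc⟩ := hO.im_snd_thd_eq_zero_of_im_fst_sig_zero_eq_zero hfin hx him hy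
    have hz : (sig θ 2 y).2.2 = x.2.2 + (x.1 - y.1) * x.2.1 := by
      have hx2 : θ.2.2.1 - x.1 * x.2.1 - x.2.2 = x.2.2 :=
        congrArg (·.2.2) (hO.fixed_of_im_fst_ne_zero hfin hx him).2
      show θ.2.2.1 - y.1 * x.2.1 - x.2.2 = _
      linear_combination hx2
    rcases eq_or_ne x.2.1 0 with h0 | h0
    · exact .inr (Prod.ext rfl (Prod.ext rfl (by rw [hz, h0, mul_zero, add_zero]; rfl)))
    · refine .inl (hO.fixed_of_im_thd_ne_zero hfin (hO.mapsTo 2 0 hx) ?_)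
      rw [hz]
      simpa [hb, hc, hy, him, Complex.ext_iff] using h0
  · have hyO : y ∈ O := by simpa [(hO.fixed_of_im_fst_ne_zero hfin hx him).1] using hO.mapsTo 0 1 hx
    exact .inr (hO.fixed_of_im_fst_ne_zero hfin hyO hy).2

theorem fixed_or_eq_sig_one_sig_zero (hO : IsEvenOrbitLike θ O) (hfin : O.Finite) (hx : x ∈ O)
    (him : x.1.im ≠ 0) :
    (sig θ 2 (sig θ 1 (sig θ 0 x)) = sig θ 1 (sig θ 0 x) ∧
      sig θ 0 (sig θ 1 (sig θ 0 x)) = sig θ 1 (sig θ 0 x)) ∨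
    sig θ 1 (sig θ 0 x) = sig θ 0 x := by
  set y := sig θ 0 x
  by_cases hy : y.1.im = 0
  · obtain ⟨hb, hc⟩ := hO.im_snd_thd_eq_zero_of_im_fst_sig_zero_eq_zero hfin hx him hy
    have hw : (sig θ 1 y).2.1 = x.2.1 + (x.1 - y.1) * x.2.2 := by
      have hx1 : θ.2.1 - x.1 * x.2.2 - x.2.1 = x.2.1 :=
        congrArg (·.2.1) (hO.fixed_of_im_fst_ne_zero hfin hx him).1
      show θ.2.1 - y.1 * x.2.2 - x.2.1 = _
      linear_combination hx1
    rcases eq_or_ne x.2.2 0 with h0 | h0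
    · exact .inr (Prod.ext rfl (Prod.ext (by rw [hw, h0, mul_zero, add_zero]; rfl) rfl))
    · refine .inl (hO.fixed_of_im_snd_ne_zero hfin (hO.mapsTo 1 0 hx) ?_)
      rw [hw]
      simpa [hb, hc, hy, him, Complex.ext_iff] using h0
  · have hyO : y ∈ O := by simpa [(hO.fixed_of_im_fst_ne_zero hfin hx him).1] using hO.mapsTo 0 1 hx
    exact .inr (hO.fixed_of_im_fst_ne_zero hfin hyO hy).1

theorem subset_four_of_im_fst_ne_zero (hO : IsEvenOrbitLike θ O) (hfin : O.Finite) (hx : x ∈ O)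
    (him : x.1.im ≠ 0) :
    O ⊆ {x, sig θ 0 x, sig θ 2 (sig θ 0 x), sig θ 1 (sig θ 0 x)} := by
  obtain ⟨hx1, hx2⟩ := hO.fixed_of_im_fst_ne_zero hfin hx him
  have hz := hO.fixed_or_eq_sig_two_sig_zero hfin hx him
  have hw := hO.fixed_or_eq_sig_one_sig_zero hfin hx him
  set y := sig θ 0 x
  have hxy : sig θ 0 x = y := rfl
  have hyx : sig θ 0 y = x := sig_involutive θ 0 x
  have hzz : sig θ 2 (sig θ 2 y) = y := sig_involutive θ 2 y
  have hww : sig θ 1 (sig θ 1 y) = y := sig_involutive θ 1 y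
  refine hO.subset_of_mapsTo _ (fun i p hp => ?_) x hx (mem_insert x _)
  simp only [mem_insert_iff, mem_singleton_iff] at hp ⊢
  rcases hp with rfl | rfl | rfl | rfl <;> rcases hz with hz | hz <;> rcases hw with hw | hw <;>
    fin_cases i <;> simp_all

theorem im_fst_eq_zero (hO : IsEvenOrbitLike θ O) (hfin : O.Finite) (hcard : 4 < O.encard)
    (hx : x ∈ O) : x.1.im = 0 := by
  by_contra him
  have := (encard_le_encard (hO.subset_four_of_im_fst_ne_zero hfin hx him)).trans
    (encard_insert_four_le _ _ _ _)
  exact (hcard.trans_le this).false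

theorem im_snd_eq_zero (hO : IsEvenOrbitLike θ O) (hfin : O.Finite) (hcard : 4 < O.encard)
    (hx : x ∈ O) : x.2.1.im = 0 :=
  hO.image_rot.im_fst_eq_zero (x := rot x) (hfin.image rot)
    (rot_injective.encard_image O ▸ hcard) (mem_image_of_mem rot hx)

theorem im_thd_eq_zero (hO : IsEvenOrbitLike θ O) (hfin : O.Finite) (hcard : 4 < O.encard)
    (hx : x ∈ O) : x.2.2.im = 0 :=
  hO.image_rot.im_snd_eq_zero (x := rot x) (hfin.image rot)
    (rot_injective.encard_image O ▸ hcard) (mem_image_of_mem rot hx)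

theorem im_params_eq_zero (hO : IsEvenOrbitLike θ O)
    (hreal : ∀ y ∈ O, y.1.im = 0 ∧ y.2.1.im = 0 ∧ y.2.2.im = 0) (hx : x ∈ O) (hxS : x ∈ pvS θ) :
    θ.1.im = 0 ∧ θ.2.1.im = 0 ∧ θ.2.2.1.im = 0 ∧ θ.2.2.2.im = 0 := by
  obtain ⟨a, b, c⟩ := hreal x hx
  obtain ⟨p₁, p₂, -⟩ := hreal _ (hO.mapsTo 0 1 hx)
  obtain ⟨-, q₂, q₃⟩ := hreal _ (hO.mapsTo 1 2 hx)
  obtain ⟨r₁, -, r₃⟩ := hreal _ (hO.mapsTo 2 0 hx)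
  have e₁ : θ.1 = (sig θ 0 (sig θ 1 x)).1 + (sig θ 0 (sig θ 1 x)).2.1 * x.2.2 + x.1 := by
    rw [sig_zero_apply, sig_one_apply]; ring
  have e₂ : θ.2.1 = (sig θ 1 (sig θ 2 x)).2.1 + x.1 * (sig θ 1 (sig θ 2 x)).2.2 + x.2.1 := by
    rw [sig_one_apply, sig_two_apply]; ring
  have e₃ : θ.2.2.1 = (sig θ 2 (sig θ 0 x)).2.2 + (sig θ 2 (sig θ 0 x)).1 * x.2.1 + x.2.2 := by
    rw [sig_two_apply, sig_zero_apply]; ring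
  have e₄ : θ.2.2.2 = θ.1 * x.1 + θ.2.1 * x.2.1 + θ.2.2.1 * x.2.2
      - x.1 * x.2.1 * x.2.2 - x.1 * x.1 - x.2.1 * x.2.1 - x.2.2 * x.2.2 := by
    have h : pvF θ x = 0 := hxS
    unfold pvF at h
    linear_combination h
  have t₁ : θ.1.im = 0 := by rw [e₁]; simp_all [Complex.mul_im]
  have t₂ : θ.2.1.im = 0 := by rw [e₂]; simp_all [Complex.mul_im]
  have t₃ : θ.2.2.1.im = 0 := by rw [e₃]; simp_all [Complex.mul_im]
  exact ⟨t₁, t₂, t₃, by rw [e₄]; simp_all [Complex.mul_im]⟩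

end IsEvenOrbitLike

/-- If `S(θ)` carries a finite `G(2)`-orbit with at least 7 elements, then the
parameters `θ₁, θ₂, θ₃, θ₄` are all real and the orbit lies in the real part
`S(θ) ∩ ℝ³` of the surface. -/
theorem finite_orbit_real (θ : ℂ × ℂ × ℂ × ℂ)
    (x₀ : ℂ × ℂ × ℂ) (hx₀ : x₀ ∈ pvS θ)
    (O : Set (ℂ × ℂ × ℂ)) (hO : O = {y | ∃ g ∈ G2 θ, g x₀ = y})
    (hfin : O.Finite) (hcard : 7 ≤ O.encard) :
    (θ.1.im = 0 ∧ θ.2.1.im = 0 ∧ θ.2.2.1.im = 0 ∧ θ.2.2.2.im = 0) ∧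
    ∀ x ∈ O, x.1.im = 0 ∧ x.2.1.im = 0 ∧ x.2.2.im = 0 := by
  have hO' : IsEvenOrbitLike θ O := hO ▸ isEvenOrbitLike_G2 θ x₀
  have hcard' : 4 < O.encard := lt_of_lt_of_le (by norm_num) hcard
  have hreal : ∀ x ∈ O, x.1.im = 0 ∧ x.2.1.im = 0 ∧ x.2.2.im = 0 := fun x hx =>
    ⟨hO'.im_fst_eq_zero hfin hcard' hx, hO'.im_snd_eq_zero hfin hcard' hx,
      hO'.im_thd_eq_zero hfin hcard' hx⟩
  exact ⟨hO'.im_params_eq_zero hreal (hO ▸ ⟨1, one_mem _, rfl⟩) hx₀, hreal⟩
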